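/- Let f ∈ ℤ[x] be irreducible over ℚ of even degree 2g+2 ≥ 4 with leading coefficient not divisible by a prime p, where p is an odd prime such that f mod p has no root in 𝔽_p. Let d be a squarefree positive integer with p | d. Then the smooth projective hyperelliptic curve C_d: dy² = f(x) has no ℚ_p-rational points. (Points at infinity: since deg f = 2g+2, the points at infinity of C_d are defined over ℚ_p iff the leading coefficient of f divided by d is a square in ℚ_p; since v_p(d) = 1 and v_p of the leading coefficient is 0, this quotient has odd valuation and is not a square, so the points at infinity are not ℚ_p-rational.) -/

import Mathlib

/-!
An affine point would give `v_p(d y²) = v_p(f(x))`. The left side is odd because `v_p(d) = 1`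
for squarefree `d`. The right side is even: for `|x|_p ≤ 1`, `f(x)` is a `p`-adic unit since
`f` has no root mod `p`; for `|x|_p > 1`, `f(x) = x^{2g+2} · rev f(1/x)` and `rev f(1/x)` is a
unit since its reduction mod `p` is the leading coefficient of `f`. At infinity,
`v_p(lc f / d) = -1` is odd, so `lc f / d` is not a square.
-/

open Polynomial

lemma padicValInt_eq_one_of_squarefree {p : ℕ} (hp : p.Prime) {d : ℤ} (hd : Squarefree d)
    (hpd : (p : ℤ) ∣ d) : padicValInt p d = 1 := by
  rw [padicValInt, ← Nat.factorization_def _ hp]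
  exact Nat.factorization_eq_one_of_squarefree (Int.squarefree_natAbs.2 hd) hp
    (Int.natCast_dvd.1 hpd)

variable {p : ℕ} [Fact p.Prime]

namespace PadicInt

lemma toZMod_eq_zero_of_norm_lt_one {z : ℤ_[p]} (hz : ‖z‖ < 1) : toZMod z = 0 := by
  rw [← RingHom.mem_ker, ker_toZMod, IsLocalRing.mem_maximalIdeal, mem_nonunits_iff, isUnit_iff]
  exact hz.ne

lemma norm_aeval_eq_one_iff (f : ℤ[X]) (z : ℤ_[p]) :
    ‖aeval z f‖ = 1 ↔ aeval (toZMod z) f ≠ 0 := by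
  have hcomm : toZMod (aeval z f) = aeval (toZMod z) f :=
    (aeval_algHom_apply toZMod.toIntAlgHom z f).symm
  rw [← isUnit_iff, ← hcomm, Ne, ← RingHom.mem_ker, ker_toZMod, IsLocalRing.mem_maximalIdeal,
    mem_nonunits_iff, not_not]

end PadicInt

namespace Padic

lemma valuation_eq_of_norm_eq {x y : ℚ_[p]} (h : ‖x‖ = ‖y‖) : x.valuation = y.valuation := by
  rcases eq_or_ne x 0 with rfl | hx
  · rw [norm_zero, eq_comm, norm_eq_zero] at h
    rw [h]
  have hy : y ≠ 0 := norm_ne_zero_iff.1 (h ▸ norm_ne_zero_iff.2 hx)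
  rw [norm_eq_zpow_neg_valuation hx, norm_eq_zpow_neg_valuation hy] at h
  have hp : (1 : ℝ) < p := by exact_mod_cast (Fact.out : p.Prime).one_lt
  exact neg_injective (zpow_right_injective₀ (by positivity) hp.ne' h)

lemma mul_sq_ne_of_odd_of_even {c a : ℚ_[p]} (hc : Odd c.valuation) (ha : a ≠ 0)
    (ha' : Even a.valuation) (y : ℚ_[p]) : c * y ^ 2 ≠ a := by
  rintro rfl
  have hc0 : c ≠ 0 := by rintro rfl; simp at hc
  have hy0 : y ≠ 0 := by rintro rfl; simp at ha
  rw [valuation_mul hc0 (pow_ne_zero 2 hy0), valuation_pow] at ha'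
  exact Int.not_even_iff_odd.2 (hc.add_even (by simp)) ha'

lemma norm_aeval_eq_one_iff (f : ℤ[X]) {x : ℚ_[p]} {z : ℤ_[p]} (hz : (z : ℚ_[p]) = x) :
    ‖aeval x f‖ = 1 ↔ aeval (PadicInt.toZMod z) f ≠ 0 := by
  rw [← PadicInt.norm_aeval_eq_one_iff, PadicInt.norm_def, ← hz, ← PadicInt.algebraMap_apply,
    aeval_algebraMap_apply, PadicInt.algebraMap_apply]

lemma norm_aeval_of_norm_le_one {f : ℤ[X]} (hroot : ∀ a : ℤ, ¬ (p : ℤ) ∣ f.eval a) {x : ℚ_[p]}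
    (hx : ‖x‖ ≤ 1) : ‖aeval x f‖ = 1 := by
  let z : ℤ_[p] := ⟨x, hx⟩
  obtain ⟨a, ha⟩ := ZMod.intCast_surjective (PadicInt.toZMod z)
  rw [norm_aeval_eq_one_iff f (z := z) rfl, ← ha, ← eq_intCast (algebraMap ℤ (ZMod p)),
    aeval_algebraMap_apply_eq_algebraMap_eval, eq_intCast, Ne, ZMod.intCast_zmod_eq_zero_iff_dvd]
  exact hroot a

lemma norm_aeval_of_one_lt_norm {f : ℤ[X]} (hlead : ¬ (p : ℤ) ∣ f.leadingCoeff) {x : ℚ_[p]}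
    (hx : 1 < ‖x‖) : ‖aeval x f‖ = ‖x‖ ^ f.natDegree := by
  have hx0 : x ≠ 0 := norm_pos_iff.1 (one_pos.trans hx)
  let _ : Invertible x := invertibleOfNonzero hx0
  have hinv : ‖x⁻¹‖ < 1 := by rw [norm_inv]; exact inv_lt_one_of_one_lt₀ hx
  let w : ℤ_[p] := ⟨x⁻¹, hinv.le⟩
  have hrev : ‖aeval x⁻¹ f.reverse‖ = 1 := by
    rw [norm_aeval_eq_one_iff _ (z := w) rfl, PadicInt.toZMod_eq_zero_of_norm_lt_one (z := w) hinv,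
      aeval_def, eval₂_at_zero, coeff_zero_reverse, algebraMap_int_eq, eq_intCast, Ne,
      ZMod.intCast_zmod_eq_zero_iff_dvd]
    exact hlead
  rw [aeval_def, ← eval₂_reverse_mul_pow, norm_mul, norm_pow, invOf_eq_inv, ← aeval_def, hrev,
    one_mul]

lemma aeval_ne_zero_and_even_valuation {f : ℤ[X]} (hroot : ∀ a : ℤ, ¬ (p : ℤ) ∣ f.eval a)
    (hlead : ¬ (p : ℤ) ∣ f.leadingCoeff) (hdeg : Even f.natDegree) (x : ℚ_[p]) :
    aeval x f ≠ 0 ∧ Even (aeval x f).valuation := by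
  rcases le_or_gt ‖x‖ 1 with hx | hx
  · have hnorm : ‖aeval x f‖ = ‖(1 : ℚ_[p])‖ := by rw [norm_aeval_of_norm_le_one hroot hx, norm_one]
    refine ⟨norm_ne_zero_iff.1 (by simp [hnorm]), ?_⟩
    rw [valuation_eq_of_norm_eq hnorm, valuation_one]
    exact Even.zero
  · have hnorm : ‖aeval x f‖ = ‖x ^ f.natDegree‖ := by
      rw [norm_aeval_of_one_lt_norm hlead hx, norm_pow]
    refine ⟨norm_ne_zero_iff.1 ?_, ?_⟩
    · rw [hnorm, norm_pow]
      exact (pow_pos (one_pos.trans hx) _).ne'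
    rw [valuation_eq_of_norm_eq hnorm, valuation_pow]
    exact (Int.even_coe_nat _ |>.2 hdeg).mul_right _

end Padic

theorem stmt_13_general (p : ℕ) [hp : Fact p.Prime] (g : ℕ)
    (f : Polynomial ℤ)
    (hdeg : f.natDegree = 2 * g + 2)
    (hlead : ¬ (p : ℤ) ∣ f.leadingCoeff)
    (hroot : ∀ a : ℤ, ¬ (p : ℤ) ∣ f.eval a)
    (d : ℤ) (hsq : Squarefree d) (hpd : (p : ℤ) ∣ d) :
    (¬ ∃ x y : ℚ_[p], (d : ℚ_[p]) * y ^ 2 = Polynomial.aeval x f) ∧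
    (¬ ∃ z : ℚ_[p], z ^ 2 = (f.leadingCoeff : ℚ_[p]) / (d : ℚ_[p])) := by
  have hd : Odd (d : ℚ_[p]).valuation := by
    rw [Padic.valuation_intCast, padicValInt_eq_one_of_squarefree hp.out hsq hpd]
    exact odd_one
  have hd0 : (d : ℚ_[p]) ≠ 0 := Int.cast_ne_zero.2 hsq.ne_zero
  refine ⟨fun ⟨x, y, hxy⟩ => ?_, fun ⟨z, hz⟩ => ?_⟩
  · obtain ⟨hne, heven⟩ :=
      Padic.aeval_ne_zero_and_even_valuation hroot hlead ⟨g + 1, by omega⟩ x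
    exact Padic.mul_sq_ne_of_odd_of_even hd hne heven y hxy
  · have hlc0 : (f.leadingCoeff : ℚ_[p]) ≠ 0 :=
      Int.cast_ne_zero.2 fun h => hlead (h ▸ dvd_zero _)
    have hlc : Even (f.leadingCoeff : ℚ_[p]).valuation := by
      rw [Padic.valuation_intCast, padicValInt.eq_zero_of_not_dvd hlead]
      exact Even.zero
    exact Padic.mul_sq_ne_of_odd_of_even hd hlc0 hlc z (by rw [hz, mul_div_cancel₀ _ hd0])

/-- for f ∈ ℤ[x] irreducible over ℚ of even degree 2g+2 ≥ 4, p an odd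
prime not dividing the leading coefficient such that f mod p has no root, and d a
squarefree positive integer with p | d, the smooth projective hyperelliptic curve
C_d : d·y² = f(x) has no ℚ_p-rational points: there are no affine ℚ_p-points, and the
points at infinity are not ℚ_p-rational because leadingCoeff(f)/d is not a square. -/
theorem stmt_13 (p : ℕ) [hp : Fact p.Prime] (hodd : p ≠ 2) (g : ℕ) (hg : 1 ≤ g)
    (f : Polynomial ℤ) (hirr : Irreducible (f.map (Int.castRingHom ℚ)))
    (hdeg : f.natDegree = 2 * g + 2)
    (hlead : ¬ (p : ℤ) ∣ f.leadingCoeff)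
    (hroot : ∀ a : ℤ, ¬ (p : ℤ) ∣ f.eval a)
    (d : ℤ) (hdpos : 0 < d) (hsq : Squarefree d) (hpd : (p : ℤ) ∣ d) :
    (¬ ∃ x y : ℚ_[p], (d : ℚ_[p]) * y ^ 2 = Polynomial.aeval x f) ∧
    (¬ ∃ z : ℚ_[p], z ^ 2 = (f.leadingCoeff : ℚ_[p]) / (d : ℚ_[p])) :=
  stmt_13_general p (hp := hp) g f hdeg hlead hroot d hsq hpd
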